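/- Let (R,m) be a one-dimensional Cohen–Macaulay local ring and let I, J, and I∩J all be stable trace ideals (regular). Then Hom_R(I,J) ≅ Hom_R(J,I) ≅ I∩J ≅ tr(IJ) as R-modules. -/
import Mathlib


open nonZeroDivisors IsLocalRing

/-- The trace ideal of an `R`-module `M`. -/
noncomputable def traceIdeal (R : Type*) [CommRing R] (M : Type*) [AddCommGroup M]
    [Module R M] : Ideal R :=
  ⨆ f : M →ₗ[R] R, LinearMap.range f

/-- An ideal is a stable regular trace ideal: it contains a nonzerodivisor,
equals its own trace and satisfies `I² = xI` for a nonzerodivisor `x ∈ I`. -/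
def IsStableTraceIdeal (R : Type*) [CommRing R] (I : Ideal R) : Prop :=
  traceIdeal R I = I ∧ ∃ x ∈ I, x ∈ R⁰ ∧ I ^ 2 = Ideal.span {x} * I

namespace HomStableTraceAux

variable {R : Type*} [CommRing R]

lemma cancel {u a b : R} (hu : u ∈ R⁰) (h : u * a = u * b) : a = b :=
  (mul_cancel_left_mem_nonZeroDivisors hu).mp h

/-- membership of values of linear maps in the trace ideal -/
lemma mem_traceIdeal {N : Ideal R} (g : N →ₗ[R] R) (n : N) : g n ∈ traceIdeal R N :=
  Submodule.mem_iSup_of_mem g (LinearMap.mem_range_self g n)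

/-- Divide a linear functional whose values lie in `u • P` by the nonzerodivisor `u`,
obtaining a linear map into `P`. -/
noncomputable def quotBy (u : R) (hu : u ∈ R⁰) {N : Submodule R R} (P : Submodule R R)
    (ψ : N →ₗ[R] R) (h : ∀ n : N, ∃ q ∈ P, u * q = ψ n) : N →ₗ[R] P where
  toFun n := ⟨(h n).choose, (h n).choose_spec.1⟩
  map_add' a b := by
    apply Subtype.ext
    apply cancel hu
    show u * (h (a + b)).choose = u * ((h a).choose + (h b).choose)
    have em : ψ (a + b) = ψ a + ψ b := map_add ψ a b
    linear_combination (h (a + b)).choose_spec.2 + em - (h a).choose_spec.2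
      - (h b).choose_spec.2
  map_smul' r a := by
    apply Subtype.ext
    apply cancel hu
    show u * (h (r • a)).choose = u * (r * (h a).choose)
    have em : ψ (r • a) = r * ψ a := by rw [map_smul]; rfl
    linear_combination (h (r • a)).choose_spec.2 + em - r * (h a).choose_spec.2

lemma quotBy_spec (u : R) (hu : u ∈ R⁰) {N : Submodule R R} (P : Submodule R R)
    (ψ : N →ₗ[R] R) (h : ∀ n : N, ∃ q ∈ P, u * q = ψ n) (n : N) :
    u * (quotBy u hu P ψ h n : R) = ψ n :=
  (h n).choose_spec.2

/-- R-valued version. -/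
noncomputable def quotByR (u : R) (hu : u ∈ R⁰) {N : Submodule R R}
    (ψ : N →ₗ[R] R) (h : ∀ n : N, ∃ q : R, u * q = ψ n) : N →ₗ[R] R :=
  (Submodule.topEquiv.toLinearMap).comp
    (quotBy u hu ⊤ ψ (fun n => by obtain ⟨q, hq⟩ := h n; exact ⟨q, trivial, hq⟩))

lemma quotByR_spec (u : R) (hu : u ∈ R⁰) {N : Submodule R R}
    (ψ : N →ₗ[R] R) (h : ∀ n : N, ∃ q : R, u * q = ψ n) (n : N) :
    u * quotByR u hu ψ h n = ψ n :=
  quotBy_spec u hu ⊤ ψ _ n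

/-- the ideal `{r | r I ⊆ x J}` -/
def D (x : R) (I J : Ideal R) : Ideal R where
  carrier := {r | ∀ a ∈ I, ∃ b ∈ J, r * a = x * b}
  zero_mem' := fun a _ => ⟨0, J.zero_mem, by ring⟩
  add_mem' := by
    intro r s hr hs a ha
    obtain ⟨b, hb, eb⟩ := hr a ha
    obtain ⟨c, hc, ec⟩ := hs a ha
    exact ⟨b + c, J.add_mem hb hc, by rw [add_mul, eb, ec]; ring⟩
  smul_mem' := by
    intro c r hr a ha
    obtain ⟨b, hb, eb⟩ := hr a ha
    exact ⟨c * b, J.mul_mem_left c hb, by rw [smul_eq_mul, mul_assoc, eb]; ring⟩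

lemma mem_D {x r : R} {I J : Ideal R} :
    r ∈ D x I J ↔ ∀ a ∈ I, ∃ b ∈ J, r * a = x * b := Iff.rfl

/-- `Hom(I, J) ≃ D x I J` where `x ∈ I` is a nonzerodivisor. -/
noncomputable def homEquivD {I J : Ideal R} {x : R} (hxI : x ∈ I) (hx : x ∈ R⁰) :
    (I →ₗ[R] J) ≃ₗ[R] D x I J := by
  have key : ∀ (f : I →ₗ[R] J) (a : R) (ha : a ∈ I),
      (f ⟨x, hxI⟩ : R) * a = x * (f ⟨a, ha⟩ : R) := by
    intro f a ha
    have h1 : (a • (⟨x, hxI⟩ : I)) = (x • (⟨a, ha⟩ : I)) := Subtype.ext (mul_comm a x)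
    have h2 := congrArg (fun w => ((f w : J) : R)) h1
    simp only [map_smul, Submodule.coe_smul, smul_eq_mul] at h2
    rw [mul_comm]; exact h2
  refine LinearEquiv.ofBijective
    { toFun := fun f => ⟨(f ⟨x, hxI⟩ : R), fun a ha => ⟨f ⟨a, ha⟩, (f ⟨a, ha⟩).2, key f a ha⟩⟩
      map_add' := fun f g => by apply Subtype.ext; simp
      map_smul' := fun c f => by apply Subtype.ext; simp } ⟨?_, ?_⟩
  · intro f g hfg
    have hx' : ((f ⟨x, hxI⟩ : J) : R) = ((g ⟨x, hxI⟩ : J) : R) := by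
      have := congrArg Subtype.val hfg
      exact this
    ext a
    have h1 := key f a a.2
    have h2 := key g a a.2
    rw [hx'] at h1
    have h3 : (f ⟨a, a.2⟩ : R) = (g ⟨a, a.2⟩ : R) := cancel hx (h1.symm.trans h2)
    exact h3
  · rintro ⟨r, hr⟩
    have h : ∀ a : I, ∃ q ∈ J, x * q = (r • Submodule.subtype I) a := by
      intro a
      obtain ⟨b, hb, eb⟩ := hr (a : R) a.2
      exact ⟨b, hb, eb.symm⟩
    refine ⟨quotBy x hx J (r • Submodule.subtype I) h, ?_⟩
    apply Subtype.ext
    show ((quotBy x hx J (r • Submodule.subtype I) h) ⟨x, hxI⟩ : R) = r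
    apply cancel hx
    have hs : x * ((quotBy x hx J (r • Submodule.subtype I) h) ⟨x, hxI⟩ : R) = r * x :=
      quotBy_spec x hx J _ h ⟨x, hxI⟩
    rw [hs]; ring

lemma stepA {I L : Ideal R} (hLI : L ≤ I) (hLt : traceIdeal R L = L)
    {x y : R} (hx : x ∈ R⁰) (hyL : y ∈ L)
    (hI2 : I ^ 2 = Ideal.span {x} * I) {a : R} (ha : a ∈ I) :
    ∃ m ∈ L, y * a = x * m := by
  have h : ∀ c : L, ∃ q : R, x * q = (a • Submodule.subtype L) c := by
    intro c
    have hmem : a * (c : R) ∈ I ^ 2 := by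
      rw [sq]; exact Ideal.mul_mem_mul ha (hLI c.2)
    rw [hI2] at hmem
    obtain ⟨i, _, ei⟩ := Ideal.mem_span_singleton_mul.mp hmem
    exact ⟨i, ei⟩
  refine ⟨quotByR x hx _ h ⟨y, hyL⟩, ?_, ?_⟩
  · have hm := mem_traceIdeal (quotByR x hx _ h) ⟨y, hyL⟩
    rwa [hLt] at hm
  · have hs : x * quotByR x hx _ h ⟨y, hyL⟩ = a * y := quotByR_spec x hx _ h ⟨y, hyL⟩
    rw [hs]; ring

lemma stepB {I L : Ideal R} (hLI : L ≤ I) (hLt : traceIdeal R L = L)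
    {x y : R} (hx : x ∈ R⁰) (hy : y ∈ R⁰) (hyL : y ∈ L)
    (hI2 : I ^ 2 = Ideal.span {x} * I) (hL2 : L ^ 2 = Ideal.span {y} * L)
    {l a : R} (hl : l ∈ L) (ha : a ∈ I) :
    ∃ m ∈ L, l * a = x * m := by
  obtain ⟨a', ha', ea⟩ := stepA hLI hLt hx hyL hI2 ha
  have hmem : l * a' ∈ L ^ 2 := by rw [sq]; exact Ideal.mul_mem_mul hl ha'
  rw [hL2] at hmem
  obtain ⟨m, hm, em⟩ := Ideal.mem_span_singleton_mul.mp hmem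
  refine ⟨m, hm, cancel hy ?_⟩
  calc y * (l * a) = l * (y * a) := by ring
    _ = l * (x * a') := by rw [ea]
    _ = x * (l * a') := by ring
    _ = x * (y * m) := by rw [← em]
    _ = y * (x * m) := by ring

lemma D_eq {I J : Ideal R} {x y : R} (hxI : x ∈ I) (hx : x ∈ R⁰)
    (hItr : traceIdeal R I = I)
    (hLtr : traceIdeal R (I ⊓ J : Ideal R) = I ⊓ J) (hy : y ∈ R⁰) (hyL : y ∈ I ⊓ J)
    (hI2 : I ^ 2 = Ideal.span {x} * I)
    (hL2 : (I ⊓ J) ^ 2 = Ideal.span {y} * (I ⊓ J)) :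
    D x I J = I ⊓ J := by
  apply le_antisymm
  · intro r hr
    refine Submodule.mem_inf.mpr ⟨?_, ?_⟩
    · have h : ∀ a : I, ∃ q : R, x * q = (r • Submodule.subtype I) a := by
        intro a
        obtain ⟨b, _, eb⟩ := hr (a : R) a.2
        exact ⟨b, eb.symm⟩
      have hgx : quotByR x hx _ h ⟨x, hxI⟩ = r := by
        apply cancel hx
        have hs : x * quotByR x hx _ h ⟨x, hxI⟩ = r * x := quotByR_spec x hx _ h ⟨x, hxI⟩
        rw [hs]; ring
      have hm := mem_traceIdeal (quotByR x hx _ h) ⟨x, hxI⟩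
      rw [hItr] at hm
      rwa [hgx] at hm
    · obtain ⟨b, hb, eb⟩ := hr x hxI
      have : r = b := cancel hx (by rw [← eb]; ring)
      rwa [this]
  · intro l hl a ha
    obtain ⟨m, hm, em⟩ := stepB inf_le_left hLtr hx hy hyL hI2 hL2 hl ha
    exact ⟨m, hm.2, em⟩

lemma trace_mul_eq {I J : Ideal R} {x z y : R}
    (hxI : x ∈ I) (hx : x ∈ R⁰) (hItr : traceIdeal R I = I)
    (hI2 : I ^ 2 = Ideal.span {x} * I)
    (hzJ : z ∈ J) (hz : z ∈ R⁰) (hJtr : traceIdeal R J = J)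
    (hJ2 : J ^ 2 = Ideal.span {z} * J)
    (hLtr : traceIdeal R (I ⊓ J : Ideal R) = I ⊓ J) (hy : y ∈ R⁰) (hyL : y ∈ I ⊓ J)
    (hL2 : (I ⊓ J) ^ 2 = Ideal.span {y} * (I ⊓ J)) :
    traceIdeal R (I * J : Ideal R) = I ⊓ J := by
  apply le_antisymm
  · apply iSup_le
    intro f
    rintro _ ⟨v, rfl⟩
    have main : ∀ (K : Ideal R) (u : R), u ∈ K → u ∈ R⁰ →
        traceIdeal R K = K →
        (∀ a : K, ∀ w : (I * J : Ideal R), (a : R) * (w : R) ∈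
          Ideal.span {u} * (I * J)) → f v ∈ K := by
      intro K u huK hu hKtr hmul
      have h : ∀ a : K, ∃ q : R, u * q =
          (f.comp ((LinearMap.toSpanSingleton R (I * J : Ideal R) v).comp
            (Submodule.subtype K))) a := by
        intro a
        obtain ⟨w, hw, ew⟩ := Ideal.mem_span_singleton_mul.mp (hmul a v)
        refine ⟨f ⟨w, hw⟩, ?_⟩
        have hsm : ((a : R) • v) = u • (⟨w, hw⟩ : (I * J : Ideal R)) :=
          Subtype.ext (by simpa [smul_eq_mul] using ew.symm)
        show u * f ⟨w, hw⟩ = f ((a : R) • v)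
        rw [hsm, map_smul, smul_eq_mul]
      have hgu : quotByR u hu _ h ⟨u, huK⟩ = f v := by
        apply cancel hu
        have hs : u * quotByR u hu _ h ⟨u, huK⟩ = f ((u : R) • v) :=
          quotByR_spec u hu _ h ⟨u, huK⟩
        rw [hs, map_smul, smul_eq_mul]
      have hm := mem_traceIdeal (quotByR u hu _ h) ⟨u, huK⟩
      rw [hKtr] at hm
      rwa [hgu] at hm
    refine Submodule.mem_inf.mpr ⟨?_, ?_⟩
    · refine main I x hxI hx hItr ?_
      intro a w
      have h1 : (a : R) * (w : R) ∈ I * (I * J) := Ideal.mul_mem_mul a.2 w.2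
      have h2 : I * (I * J) = Ideal.span {x} * (I * J) := by
        rw [← mul_assoc, ← sq, hI2, mul_assoc]
      rwa [h2] at h1
    · refine main J z hzJ hz hJtr ?_
      intro a w
      have h1 : (a : R) * (w : R) ∈ J * (I * J) := Ideal.mul_mem_mul a.2 w.2
      have h2 : J * (I * J) = Ideal.span {z} * (I * J) := by
        rw [mul_comm I J, ← mul_assoc, ← sq, hJ2, mul_assoc]
      rwa [h2] at h1
  · intro l hl
    have hxz : x * z ∈ R⁰ := mul_mem hx hz
    have key : Ideal.span {l} * (I * J) ≤ Ideal.span {x * z} * (I ⊓ J) := by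
      have h1 : Ideal.span {l} * I ≤ Ideal.span {x} * (I ⊓ J) := by
        rw [Ideal.span_singleton_mul_le_iff]
        intro a ha
        obtain ⟨m, hm, em⟩ := stepB inf_le_left hLtr hx hy hyL hI2 hL2 hl ha
        exact Ideal.mem_span_singleton_mul.mpr ⟨m, hm, em.symm⟩
      have h2 : (I ⊓ J) * J ≤ Ideal.span {z} * (I ⊓ J) := by
        rw [Ideal.mul_le]
        intro m hm b hb
        obtain ⟨m', hm', em'⟩ := stepB inf_le_right hLtr hz hy hyL hJ2 hL2 hm hb
        exact Ideal.mem_span_singleton_mul.mpr ⟨m', hm', em'.symm⟩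
      calc Ideal.span {l} * (I * J) = (Ideal.span {l} * I) * J := (mul_assoc _ _ _).symm
        _ ≤ (Ideal.span {x} * (I ⊓ J)) * J := Ideal.mul_mono_left h1
        _ = Ideal.span {x} * ((I ⊓ J) * J) := mul_assoc _ _ _
        _ ≤ Ideal.span {x} * (Ideal.span {z} * (I ⊓ J)) := Ideal.mul_mono_right h2
        _ = Ideal.span {x * z} * (I ⊓ J) := by
            rw [← mul_assoc, Ideal.span_singleton_mul_span_singleton]
    have h : ∀ v : (I * J : Ideal R), ∃ q : R,
        (x * z) * q = (l • Submodule.subtype (I * J)) v := by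
      intro v
      have hmem : l * (v : R) ∈ Ideal.span {l} * (I * J) :=
        Ideal.mul_mem_mul (Ideal.mem_span_singleton_self l) v.2
      obtain ⟨m, _, em⟩ := Ideal.mem_span_singleton_mul.mp (key hmem)
      exact ⟨m, em⟩
    have hxzIJ : x * z ∈ I * J := Ideal.mul_mem_mul hxI hzJ
    have hgl : quotByR (x * z) hxz _ h ⟨x * z, hxzIJ⟩ = l := by
      apply cancel hxz
      have hs : (x * z) * quotByR (x * z) hxz _ h ⟨x * z, hxzIJ⟩ = l * (x * z) :=
        quotByR_spec (x * z) hxz _ h ⟨x * z, hxzIJ⟩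
      rw [hs]; ring
    have hm := mem_traceIdeal (quotByR (x * z) hxz _ h) ⟨x * z, hxzIJ⟩
    rwa [hgl] at hm

end HomStableTraceAux

open HomStableTraceAux in
/-- Let `(R,m)` be a one-dimensional Cohen–Macaulay local ring and suppose
`I`, `J` and `I ∩ J` are all (regular) stable trace ideals.  Then
`Hom_R(I,J) ≅ Hom_R(J,I) ≅ I ∩ J ≅ tr(IJ)` as `R`-modules. -/
theorem hom_stable_trace (R : Type*) [CommRing R] [IsLocalRing R] [IsNoetherianRing R]
    (hdim : ringKrullDim R = 1)
    (hCM : ∃ r ∈ maximalIdeal R, r ∈ R⁰)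
    (I J : Ideal R)
    (hI : IsStableTraceIdeal R I) (hJ : IsStableTraceIdeal R J)
    (hIJ : IsStableTraceIdeal R (I ⊓ J)) :
    Nonempty ((I →ₗ[R] J) ≃ₗ[R] (J →ₗ[R] I)) ∧
      Nonempty ((J →ₗ[R] I) ≃ₗ[R] (I ⊓ J : Ideal R)) ∧
      Nonempty ((I ⊓ J : Ideal R) ≃ₗ[R] traceIdeal R (I * J : Ideal R)) := by
  obtain ⟨hItr, x, hxI, hx, hI2⟩ := hI
  obtain ⟨hJtr, z, hzJ, hz, hJ2⟩ := hJ
  obtain ⟨hLtr, y, hyL, hy, hL2⟩ := hIJ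
  have hcomm : J ⊓ I = I ⊓ J := inf_comm J I
  have eI : D x I J = I ⊓ J := D_eq hxI hx hItr hLtr hy hyL hI2 hL2
  have eJ : D z J I = I ⊓ J := by
    rw [D_eq hzJ hz hJtr (by rw [hcomm]; exact hLtr) hy (by rw [hcomm]; exact hyL) hJ2
      (by rw [hcomm]; exact hL2), hcomm]
  have etr : traceIdeal R (I * J : Ideal R) = I ⊓ J :=
    trace_mul_eq hxI hx hItr hI2 hzJ hz hJtr hJ2 hLtr hy hyL hL2
  refine ⟨⟨?_⟩, ⟨?_⟩, ⟨?_⟩⟩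
  · exact (homEquivD hxI hx).trans
      ((LinearEquiv.ofEq _ _ (eI.trans eJ.symm)).trans (homEquivD hzJ hz).symm)
  · exact (homEquivD hzJ hz).trans (LinearEquiv.ofEq _ _ eJ)
  · exact LinearEquiv.ofEq _ _ etr.symm
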